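/- Let H be a connected graph with γ_r2(H) = 3 such that every minimum-weight 2-rainbow dominating function φ of H satisfies φ(h) ≠ {1,2} for all vertices h of H. Then for every graph G, γ_r2(G ∘ H) = min{ 2|A| + 3|B| : (A,B) is a dominating couple of G }. -/

import Mathlib

open Finset

def SimpleGraph.lexProd {α β : Type*} (G : SimpleGraph α) (H : SimpleGraph β) :
    SimpleGraph (α × β) where
  Adj x y := G.Adj x.1 y.1 ∨ (x.1 = y.1 ∧ H.Adj x.2 y.2)
  symm := by
    constructor
    intro x y h
    rcases h with h | ⟨e, h⟩
    · exact Or.inl h.symm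
    · exact Or.inr ⟨e.symm, h.symm⟩
  loopless := by
    constructor
    intro x h
    rcases h with h | ⟨_, h⟩
    · exact G.irrefl h
    · exact H.irrefl h

/-- `f` is a `k`-rainbow dominating function of `G`. -/
def IsRDF {α : Type*} (G : SimpleGraph α) (k : ℕ) (f : α → Finset (Fin k)) : Prop :=
  ∀ v, f v = ∅ → ∀ i : Fin k, ∃ u, G.Adj u v ∧ i ∈ f u

/-- weight of a labeling -/
def rdWeight {α : Type*} [Fintype α] {k : ℕ} (f : α → Finset (Fin k)) : ℕ :=
  ∑ v, (f v).card

/-- the `k`-rainbow domination number -/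
noncomputable def rdNum {α : Type*} (G : SimpleGraph α) [Fintype α] (k : ℕ) : ℕ :=
  sInf {n | ∃ f : α → Finset (Fin k), IsRDF G k f ∧ rdWeight f = n}

/-- `D` is a dominating set of `G` -/
def IsDom {α : Type*} (G : SimpleGraph α) (D : Set α) : Prop :=
  ∀ v, v ∈ D ∨ ∃ u ∈ D, G.Adj u v

/-- `D` is a total dominating set of `G` -/
def IsTotalDom {α : Type*} (G : SimpleGraph α) (D : Set α) : Prop :=
  ∀ v, ∃ u ∈ D, G.Adj u v

/-- the domination number -/
noncomputable def domNum {α : Type*} (G : SimpleGraph α) [Fintype α] : ℕ :=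
  sInf {n | ∃ D : Finset α, IsDom G ↑D ∧ D.card = n}

/-- the total domination number -/
noncomputable def totalDomNum {α : Type*} (G : SimpleGraph α) [Fintype α] : ℕ :=
  sInf {n | ∃ D : Finset α, IsTotalDom G ↑D ∧ D.card = n}

/-- `(A, B)` is a dominating couple of `G` -/
def IsDomCouple {α : Type*} [DecidableEq α] (G : SimpleGraph α) (A B : Finset α) : Prop :=
  Disjoint A B ∧ ∀ x, x ∉ B → ∃ w ∈ A ∪ B, G.Adj w x


/-!
Upper bound: over each vertex of `B` copy a minimum 2RDF of `H` that uses both colours, and over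
each vertex of `A` put `{1, 2}` on a single vertex.

Lower bound: take a minimum 2RDF `f` of `G ∘ H` with as many `{1, 2}` labels as possible, let `B`
be the copies of weight at least 3 and `A` those of weight 2 together with the weight-1 copies
carrying the rarer colour `c`; then `2|A| + 3|B| ≤ w(f)`. If a copy `x ∉ B` had no neighbour in
`A ∪ B`, its empty vertices would all have to see `c` inside the copy. The hypotheses on `H` say
that no vertex `a` dominates all of `H` but one further vertex `b` (else `a ↦ {1, 2}`,
`b ↦ {1}` would be a 2RDF of weight at most 3 using `{1, 2}`), which forces two vertices
labelled `{c}` in copy `x`. The other colour then comes from a weight-1 neighbouring copy, and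
relabelling one `{c}` as `∅` and that singleton as `{1, 2}` gives a minimum 2RDF with more
`{1, 2}` labels.
-/

open Function

section RainbowDomination

variable {γ : Type*} {G : SimpleGraph γ} {k : ℕ}

theorem isRDF_of_forall_ne_empty {f : γ → Finset (Fin k)} (hf : ∀ v, f v ≠ ∅) : IsRDF G k f :=
  fun v hv => absurd hv (hf v)

variable [Fintype γ]

theorem rdNum_le_rdWeight {f : γ → Finset (Fin k)} (hf : IsRDF G k f) : rdNum G k ≤ rdWeight f :=
  Nat.sInf_le ⟨f, hf, rfl⟩

theorem exists_rdWeight_eq_rdNum (G : SimpleGraph γ) (k : ℕ) :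
    ∃ f : γ → Finset (Fin k), IsRDF G k f ∧ rdWeight f = rdNum G k := by
  have hne : {n | ∃ f : γ → Finset (Fin k), IsRDF G k f ∧ rdWeight f = n}.Nonempty :=
    ⟨_, fun _ => univ, fun _ hv i => (notMem_empty i (hv ▸ mem_univ i)).elim, rfl⟩
  exact Nat.sInf_mem hne

theorem rdNum_le_card [NeZero k] (G : SimpleGraph γ) : rdNum G k ≤ Fintype.card γ := by
  simpa [rdWeight] using
    rdNum_le_rdWeight (G := G) (isRDF_of_forall_ne_empty (f := fun _ => {(0 : Fin k)})
      fun _ => singleton_ne_empty 0)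

theorem sum_card_le_rdWeight (f : γ → Finset (Fin k)) (s : Finset γ) :
    ∑ v ∈ s, #(f v) ≤ rdWeight f :=
  sum_le_sum_of_subset (subset_univ s)

theorem card_le_rdWeight (f : γ → Finset (Fin k)) (v : γ) : #(f v) ≤ rdWeight f :=
  single_le_sum (f := fun v => #(f v)) (fun _ _ => Nat.zero_le _) (mem_univ v)

theorem card_support_le_rdWeight (f : γ → Finset (Fin k)) :
    #(univ.filter fun v => f v ≠ ∅) ≤ rdWeight f := by
  rw [card_filter]
  refine sum_le_sum fun v _ => ?_
  split_ifs with h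
  exacts [card_pos.mpr (nonempty_iff_ne_empty.mpr h), Nat.zero_le _]

theorem exists_eq_empty_of_rdWeight_lt_card {f : γ → Finset (Fin k)}
    (hf : rdWeight f < Fintype.card γ) : ∃ v, f v = ∅ := by
  obtain ⟨v, -, hv⟩ := exists_mem_notMem_of_card_lt_card
    ((card_support_le_rdWeight f).trans_lt (hf.trans_eq card_univ.symm))
  exact ⟨v, by simpa using hv⟩

theorem rdWeight_update_add [DecidableEq γ] (f : γ → Finset (Fin k)) (v : γ)
    (s : Finset (Fin k)) : rdWeight (update f v s) + #(f v) = rdWeight f + #s := by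
  unfold rdWeight
  rw [← add_sum_erase _ _ (mem_univ v), ← add_sum_erase _ _ (mem_univ v), update_self,
    sum_congr rfl fun w hw => by rw [update_of_ne (ne_of_mem_erase hw)]]
  ring

theorem exists_min_rdf_forall_color (G : SimpleGraph γ) (hγ : 2 ≤ Fintype.card γ) :
    ∃ φ : γ → Finset (Fin 2), IsRDF G 2 φ ∧ rdWeight φ = rdNum G 2 ∧ ∀ i, ∃ v, i ∈ φ v := by
  classical
  obtain ⟨φ, hφ, hφw⟩ := exists_rdWeight_eq_rdNum G 2
  by_cases hcol : ∀ i, ∃ v, i ∈ φ v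
  · exact ⟨φ, hφ, hφw, hcol⟩
  -- A colour missing from `φ` forbids empty labels, so `φ` weighs at least `|V|`.
  push Not at hcol
  obtain ⟨i₀, hi₀⟩ := hcol
  have hne : ∀ v, φ v ≠ ∅ := fun v hv =>
    let ⟨u, _, hu⟩ := hφ v hv i₀
    hi₀ u hu
  have hcard : Fintype.card γ ≤ rdWeight φ := by simpa [hne] using card_support_le_rdWeight φ
  obtain ⟨v₀⟩ : Nonempty γ := Fintype.card_pos_iff.mp (by omega)
  obtain ⟨v₁, hv₁⟩ := Fintype.exists_ne_of_one_lt_card hγ v₀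
  let ψ : γ → Finset (Fin 2) := fun v => if v = v₀ then {0} else {1}
  have hψ : IsRDF G 2 ψ := isRDF_of_forall_ne_empty fun v => by dsimp [ψ]; split_ifs <;> simp
  have hψw : rdWeight ψ = Fintype.card γ := by simp [rdWeight, ψ, apply_ite card]
  refine ⟨ψ, hψ, le_antisymm (hψw ▸ hcard.trans hφw.le) (rdNum_le_rdWeight hψ), fun i => ?_⟩
  fin_cases i
  exacts [⟨v₀, by simp [ψ]⟩, ⟨v₁, by simp [ψ, hv₁]⟩]

theorem eq_singleton_of_rdWeight_le_two {f : γ → Finset (Fin k)} (hf : rdWeight f ≤ 2)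
    {a b : γ} (hab : a ≠ b) {c : Fin k} (ha : c ∈ f a) (hb : c ∈ f b) :
    f a = {c} ∧ f b = {c} ∧ ∀ v, v ≠ a → v ≠ b → f v = ∅ := by
  classical
  have hpair := sum_card_le_rdWeight f {a, b}
  rw [sum_pair hab] at hpair
  have ha₁ := card_pos.mpr ⟨c, ha⟩
  have hb₁ := card_pos.mpr ⟨c, hb⟩
  refine ⟨eq_singleton_iff_unique_mem.mpr ⟨ha, fun i hi => card_le_one.mp (by omega) i hi c ha⟩,
    eq_singleton_iff_unique_mem.mpr ⟨hb, fun i hi => card_le_one.mp (by omega) i hi c hb⟩,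
    fun v hva hvb => card_eq_zero.mp ?_⟩
  have htriple := sum_card_le_rdWeight f {v, a, b}
  rw [sum_insert (by simp [hva, hvb]), sum_pair hab] at htriple
  omega

theorem exists_ne_ne_not_adj (hr : rdNum G 2 = 3)
    (hno : ∀ φ : γ → Finset (Fin 2), IsRDF G 2 φ → rdWeight φ = 3 → ∀ v, φ v ≠ univ)
    (a b : γ) : ∃ v, v ≠ a ∧ v ≠ b ∧ ¬ G.Adj a v := by
  classical
  by_contra! hab
  let ψ : γ → Finset (Fin 2) := update (update (fun _ => ∅) b {0}) a univ
  have hψ : IsRDF G 2 ψ := by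
    intro v hv i
    have hva : v ≠ a := by rintro rfl; simp [ψ, univ_nonempty.ne_empty] at hv
    have hvb : v ≠ b := by rintro rfl; simp [ψ, hva] at hv
    exact ⟨a, hab v hva hvb, by simp [ψ]⟩
  have hψw : rdWeight ψ ≤ 3 := by
    change rdWeight (update (update (fun _ => ∅) b {(0 : Fin 2)}) a univ) ≤ 3
    have h₁ := rdWeight_update_add (update (fun _ => ∅) b {(0 : Fin 2)}) a univ
    have h₂ := rdWeight_update_add (fun _ : γ => (∅ : Finset (Fin 2))) b {0}
    have h₀ : rdWeight (fun _ : γ => (∅ : Finset (Fin 2))) = 0 := by simp [rdWeight]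
    simp only [card_univ, Fintype.card_fin, card_singleton, card_empty, h₀] at h₁ h₂
    omega
  exact hno ψ hψ (le_antisymm hψw (hr ▸ rdNum_le_rdWeight hψ)) a (by simp [ψ])

theorem exists_ne_mem_of_forall_eq_empty (hγ : 3 ≤ Fintype.card γ)
    (hG : ∀ a b : γ, ∃ v, v ≠ a ∧ v ≠ b ∧ ¬ G.Adj a v) {f : γ → Finset (Fin k)}
    (hf : rdWeight f ≤ 2) {c : Fin k} (hc : ∀ v, f v = ∅ → ∃ u, G.Adj u v ∧ c ∈ f u) :
    ∃ a b, a ≠ b ∧ c ∈ f a ∧ c ∈ f b := by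
  classical
  set S := univ.filter fun v => f v ≠ ∅
  have hS : #S ≤ 2 := (card_support_le_rdWeight f).trans hf
  obtain ⟨v₀, hv₀⟩ := exists_eq_empty_of_rdWeight_lt_card (f := f) (by omega)
  obtain ⟨a, -, ha⟩ := hc v₀ hv₀
  have haS : a ∈ S := by simpa [S] using ne_empty_of_mem ha
  have : Nonempty γ := ⟨a⟩
  obtain ⟨b, hb⟩ := card_le_one_iff_subset_singleton.mp
    (show #(S.erase a) ≤ 1 by rw [card_erase_of_mem haS]; omega)
  -- `S ⊆ {a, b}`, so a vertex outside `{a, b}` that `a` misses is empty and needs another `c`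
  obtain ⟨v, hva, hvb, hav⟩ := hG a b
  have hv : f v = ∅ := by
    by_contra hne
    exact hvb (mem_singleton.mp (hb (mem_erase.mpr ⟨hva, by simpa [S] using hne⟩)))
  obtain ⟨u, huv, hu⟩ := hc v hv
  exact ⟨a, u, by rintro rfl; exact hav huv, ha, hu⟩

def fullCount (f : γ → Finset (Fin k)) : ℕ :=
  #(univ.filter fun v => f v = univ)

def IsFullestMinRDF (G : SimpleGraph γ) (k : ℕ) (f : γ → Finset (Fin k)) : Prop :=
  IsRDF G k f ∧ rdWeight f = rdNum G k ∧
    ∀ g, IsRDF G k g → rdWeight g = rdNum G k → fullCount g ≤ fullCount f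

theorem exists_isFullestMinRDF (G : SimpleGraph γ) (k : ℕ) : ∃ f, IsFullestMinRDF G k f := by
  classical
  obtain ⟨f₀, hf₀⟩ := exists_rdWeight_eq_rdNum G k
  obtain ⟨f, hf, hmax⟩ := exists_max_image
    (univ.filter fun g : γ → Finset (Fin k) => IsRDF G k g ∧ rdWeight g = rdNum G k) fullCount
    ⟨f₀, mem_filter.mpr ⟨mem_univ _, hf₀⟩⟩
  obtain ⟨hfR, hfw⟩ := (mem_filter.mp hf).2
  exact ⟨f, hfR, hfw, fun g hg hgw => hmax g (mem_filter.mpr ⟨mem_univ _, hg, hgw⟩)⟩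

theorem fullCount_lt_fullCount_update [DecidableEq γ] {f : γ → Finset (Fin k)} {v w : γ}
    (hv : f v ≠ univ) (hw : f w ≠ univ) :
    fullCount f < fullCount (update (update f v ∅) w univ) := by
  refine card_lt_card ((ssubset_iff_of_subset fun u hu => ?_).mpr ⟨w, by simp, by simpa using hw⟩)
  have hu : f u = univ := (mem_filter.mp hu).2
  rcases eq_or_ne u w with rfl | huw
  · simp
  · have huv : u ≠ v := by rintro rfl; exact hv hu
    simp [update_of_ne huw, update_of_ne huv, hu]

end RainbowDomination

section LexProd

variable {α β : Type*} {G : SimpleGraph α} {H : SimpleGraph β} {k : ℕ}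

theorem IsRDF.update_update [DecidableEq α] [DecidableEq β] {f : α × β → Finset (Fin k)}
    (hf : IsRDF (G.lexProd H) k f) {x u : α} {a b m : β} (hux : G.Adj u x) (hab : a ≠ b)
    (hsub : f (x, b) ⊆ f (x, a)) :
    IsRDF (G.lexProd H) k (update (update f (x, b) ∅) (u, m) univ) := by
  have hne : ∀ h, (x, h) ≠ (u, m) := fun h e => hux.ne (congrArg Prod.fst e).symm
  rintro ⟨z, h⟩ hzh i
  by_cases hzm : (z, h) = (u, m)
  · rw [hzm, update_self] at hzh
    exact (notMem_empty i (hzh ▸ mem_univ i)).elim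
  by_cases hzb : (z, h) = (x, b)
  · obtain ⟨rfl, rfl⟩ := Prod.ext_iff.mp hzb
    exact ⟨(u, m), Or.inl hux, by simp⟩
  rw [update_of_ne hzm, update_of_ne hzb] at hzh
  obtain ⟨⟨v, n⟩, hadj, hi⟩ := hf _ hzh i
  by_cases hvm : (v, n) = (u, m)
  · exact ⟨(u, m), hvm ▸ hadj, by simp⟩
  by_cases hvb : (v, n) = (x, b)
  · obtain ⟨rfl, rfl⟩ := Prod.ext_iff.mp hvb
    rcases hadj with hG | ⟨rfl, -⟩
    · refine ⟨(v, a), Or.inl hG, ?_⟩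
      rw [update_of_ne (hne a), update_of_ne (by simp [hab])]
      exact hsub hi
    · exact ⟨(u, m), Or.inl hux, by simp⟩
  · exact ⟨(v, n), hadj, by rwa [update_of_ne hvm, update_of_ne hvb]⟩

variable [Fintype β]

def copyWeight (f : α × β → Finset (Fin k)) (x : α) : ℕ :=
  rdWeight fun h => f (x, h)

def copyColors (f : α × β → Finset (Fin k)) (x : α) : Finset (Fin k) :=
  univ.biUnion fun h => f (x, h)

theorem rdWeight_eq_sum_copyWeight [Fintype α] (f : α × β → Finset (Fin k)) :
    rdWeight f = ∑ x, copyWeight f x :=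
  Fintype.sum_prod_type _

theorem card_copyColors_le (f : α × β → Finset (Fin k)) (x : α) :
    #(copyColors f x) ≤ copyWeight f x :=
  card_biUnion_le

theorem IsRDF.exists_adj_mem_of_forall_notMem {f : α × β → Finset (Fin k)}
    (hf : IsRDF (G.lexProd H) k f) {x : α} {i : Fin k}
    (hx : ∀ u, G.Adj u x → i ∉ copyColors f u) {h : β} (hh : f (x, h) = ∅) :
    ∃ m, H.Adj m h ∧ i ∈ f (x, m) := by
  obtain ⟨⟨u, m⟩, hG | ⟨rfl, hH⟩, hi⟩ := hf (x, h) hh i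
  · exact absurd (mem_biUnion.mpr ⟨m, mem_univ _, hi⟩) (hx u hG)
  · exact ⟨m, hH, hi⟩

theorem rdNum_lexProd_le [Fintype α] [DecidableEq α] (hβ : 2 ≤ Fintype.card β)
    {A B : Finset α} (hAB : IsDomCouple G A B) :
    rdNum (G.lexProd H) 2 ≤ 2 * #A + rdNum H 2 * #B := by
  classical
  obtain ⟨φ, hφ, hφw, hφc⟩ := exists_min_rdf_forall_color H hβ
  obtain ⟨h₀⟩ : Nonempty β := Fintype.card_pos_iff.mp (by omega)
  let f : α × β → Finset (Fin 2) := fun p =>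
    if p.1 ∈ B then φ p.2 else if p.1 ∈ A ∧ p.2 = h₀ then univ else ∅
  have hf : IsRDF (G.lexProd H) 2 f := by
    rintro ⟨x, h⟩ hxh i
    by_cases hxB : x ∈ B
    · obtain ⟨m, hm, hi⟩ := hφ h (by simpa [f, hxB] using hxh) i
      exact ⟨(x, m), Or.inr ⟨rfl, hm⟩, by simp [f, hxB, hi]⟩
    obtain ⟨w, hw, hwx⟩ := hAB.2 x hxB
    rcases mem_union.mp hw with hwA | hwB
    · exact ⟨(w, h₀), Or.inl hwx, by simp [f, hwA, disjoint_left.mp hAB.1 hwA]⟩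
    · obtain ⟨m, hm⟩ := hφc i
      exact ⟨(w, m), Or.inl hwx, by simp [f, hwB, hm]⟩
  have hcopy : ∀ x, copyWeight f x =
      (if x ∈ A then 2 else 0) + (if x ∈ B then rdNum H 2 else 0) := by
    intro x
    by_cases hxB : x ∈ B
    · simp [copyWeight, f, hxB, disjoint_right.mp hAB.1 hxB, ← hφw]
    · by_cases hxA : x ∈ A <;> simp [copyWeight, rdWeight, f, hxB, hxA, apply_ite card]
  calc rdNum (G.lexProd H) 2 ≤ rdWeight f := rdNum_le_rdWeight hf
    _ = 2 * #A + rdNum H 2 * #B := by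
      simp [rdWeight_eq_sum_copyWeight, hcopy, sum_add_distrib, sum_ite_mem, mul_comm]

/-- Emptying `(x, b)` and filling `(u, m)` with both colours would give a minimum RDF with more
full vertices. -/
theorem IsFullestMinRDF.card_ne_one_of_adj [Fintype α] {f : α × β → Finset (Fin 2)}
    (hf : IsFullestMinRDF (G.lexProd H) 2 f) {x u : α} {a b : β} (hux : G.Adj u x)
    (hab : a ≠ b) (hsub : f (x, b) ⊆ f (x, a)) (hb : #(f (x, b)) = 1) (m : β) :
    #(f (u, m)) ≠ 1 := by
  classical
  intro hm
  have hne : (u, m) ≠ (x, b) := fun e => hux.ne (congrArg Prod.fst e)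
  have hw : rdWeight (update (update f (x, b) ∅) (u, m) univ) = rdWeight f := by
    have h₁ := rdWeight_update_add (update f (x, b) ∅) (u, m) univ
    have h₂ := rdWeight_update_add f (x, b) ∅
    rw [update_of_ne hne, hm] at h₁
    simp only [hb, card_univ, Fintype.card_fin, card_empty] at h₁ h₂
    omega
  have hfull : ∀ p, #(f p) = 1 → f p ≠ univ := fun p hp h => by simp [h] at hp
  exact (fullCount_lt_fullCount_update (hfull _ hb) (hfull _ hm)).not_ge
    (hf.2.2 _ (hf.1.update_update hux hab hsub) (hw.trans hf.2.1))

theorem IsFullestMinRDF.exists_adj_of_copyWeight_le_two [Fintype α] (hβ : 3 ≤ Fintype.card β)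
    (hH : ∀ a b : β, ∃ h, h ≠ a ∧ h ≠ b ∧ ¬ H.Adj a h)
    {f : α × β → Finset (Fin 2)} (hf : IsFullestMinRDF (G.lexProd H) 2 f) (c : Fin 2) {x : α}
    (hx : copyWeight f x ≤ 2) : ∃ u, G.Adj u x ∧ (2 ≤ copyWeight f u ∨ c ∈ copyColors f u) := by
  by_contra! hnbr
  obtain ⟨a, b, hab, ha, hb⟩ := exists_ne_mem_of_forall_eq_empty hβ hH hx
    fun h hh => hf.1.exists_adj_mem_of_forall_notMem (fun u hu => (hnbr u hu).2) hh
  obtain ⟨hxa, hxb, hrest⟩ := eq_singleton_of_rdWeight_le_two hx hab ha hb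
  obtain ⟨h₀, hh₀⟩ := exists_eq_empty_of_rdWeight_lt_card (f := fun h => f (x, h))
    (hx.trans_lt (by omega))
  -- copy `x` carries only `c`, so `c + 1` has to reach `(x, h₀)` from a neighbouring copy
  obtain ⟨⟨u, m⟩, hG | ⟨rfl, -⟩, hum⟩ := hf.1 (x, h₀) hh₀ (c + 1)
  · refine hf.card_ne_one_of_adj hG hab (by rw [hxa, hxb]) (by simp [hxb]) m
      (le_antisymm ?_ (card_pos.mpr ⟨_, hum⟩))
    exact (card_le_rdWeight _ m).trans (Nat.le_of_lt_succ (hnbr u hG).1)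
  · have : f (u, m) = {c} := by
      rcases eq_or_ne m a with rfl | hma
      · exact hxa
      rcases eq_or_ne m b with rfl | hmb
      · exact hxb
      simp [hrest m hma hmb] at hum
    simp [this] at hum

def coupleA [Fintype α] (f : α × β → Finset (Fin k)) (c : Fin k) : Finset α :=
  univ.filter fun x => copyWeight f x = 2 ∨ (copyWeight f x = 1 ∧ c ∈ copyColors f x)

def coupleB [Fintype α] (f : α × β → Finset (Fin k)) : Finset α :=
  univ.filter fun x => 3 ≤ copyWeight f x

theorem three_mul_card_add_two_mul_card_add_card_le_sum {ι : Type*} [Fintype ι] (w : ι → ℕ) :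
    3 * #(univ.filter fun x => 3 ≤ w x) + 2 * #(univ.filter fun x => w x = 2) +
      #(univ.filter fun x => w x = 1) ≤ ∑ x, w x := by
  simp only [card_filter, mul_sum, ← sum_add_distrib]
  exact sum_le_sum fun x _ => by split_ifs <;> omega

/-- A copy of weight 1 carries a single colour, so one of the two colours is carried by at most
half of these copies. -/
theorem exists_two_mul_card_coupleA_add_three_mul_card_coupleB_le [Fintype α] [DecidableEq α]
    (f : α × β → Finset (Fin 2)) :
    ∃ c, 2 * #(coupleA f c) + 3 * #(coupleB f) ≤ rdWeight f := by
  let W : Fin 2 → Finset α := fun i =>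
    univ.filter fun x => copyWeight f x = 1 ∧ i ∈ copyColors f x
  have hA : ∀ c, #(coupleA f c) ≤ #(univ.filter fun x => copyWeight f x = 2) + #(W c) :=
    fun c => by rw [coupleA, filter_or]; exact card_union_le _ _
  have hW : #(W 0) + #(W 1) ≤ #(univ.filter fun x => copyWeight f x = 1) := by
    rw [← card_union_of_disjoint]
    · exact card_le_card fun x hx => by simp only [W, mem_union, mem_filter] at hx ⊢; tauto
    refine disjoint_filter.mpr fun x _ h₀ h₁ => ?_
    have huniv : copyColors f x = univ := eq_univ_of_forall fun i => by
      fin_cases i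
      exacts [h₀.2, h₁.2]
    have := card_copyColors_le f x
    simp [huniv, h₀.1] at this
  have hsum := three_mul_card_add_two_mul_card_add_card_le_sum (copyWeight f)
  rw [← rdWeight_eq_sum_copyWeight] at hsum
  have hB : #(coupleB f) = #(univ.filter fun x => 3 ≤ copyWeight f x) := rfl
  rcases le_total #(W 0) #(W 1) with h | h
  · exact ⟨0, by have := hA 0; omega⟩
  · exact ⟨1, by have := hA 1; omega⟩

theorem mem_coupleA_union_coupleB [Fintype α] [DecidableEq α] {f : α × β → Finset (Fin k)}
    {c : Fin k} {u : α} (hu : 2 ≤ copyWeight f u ∨ c ∈ copyColors f u) :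
    u ∈ coupleA f c ∪ coupleB f := by
  simp only [coupleA, coupleB, mem_union, mem_filter, mem_univ, true_and]
  by_cases h3 : 3 ≤ copyWeight f u
  · exact Or.inr h3
  refine Or.inl ?_
  rcases hu with h | h
  · exact Or.inl (by omega)
  · have := card_pos.mpr ⟨c, h⟩
    have := card_copyColors_le f u
    by_cases h2 : copyWeight f u = 2
    exacts [Or.inl h2, Or.inr ⟨by omega, h⟩]

theorem exists_isDomCouple_le_rdNum_lexProd [Fintype α] [DecidableEq α]
    (hβ : 3 ≤ Fintype.card β) (hH : ∀ a b : β, ∃ h, h ≠ a ∧ h ≠ b ∧ ¬ H.Adj a h) :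
    ∃ A B : Finset α, IsDomCouple G A B ∧ 2 * #A + 3 * #B ≤ rdNum (G.lexProd H) 2 := by
  classical
  obtain ⟨f, hf⟩ := exists_isFullestMinRDF (G.lexProd H) 2
  obtain ⟨c, hc⟩ := exists_two_mul_card_coupleA_add_three_mul_card_coupleB_le f
  refine ⟨coupleA f c, coupleB f, ⟨disjoint_filter.mpr fun x _ hA hB => by omega, fun x hx => ?_⟩,
    hf.2.1 ▸ hc⟩
  obtain ⟨u, hux, hu⟩ := hf.exists_adj_of_copyWeight_le_two hβ hH c (x := x)
    (by simp [coupleB] at hx; omega)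
  exact ⟨u, mem_coupleA_union_coupleB hu, hux⟩

end LexProd

theorem stmt14_general {α β : Type*} [Fintype α] [Fintype β] [DecidableEq α]
    (G : SimpleGraph α) (H : SimpleGraph β)
    (hr : rdNum H 2 = 3)
    (hno : ∀ φ : β → Finset (Fin 2), IsRDF H 2 φ → rdWeight φ = 3 →
      ∀ h : β, φ h ≠ Finset.univ) :
    rdNum (G.lexProd H) 2 =
      sInf {n | ∃ A B : Finset α, IsDomCouple G A B ∧ n = 2 * A.card + 3 * B.card} := by
  have hβ : 3 ≤ Fintype.card β := hr ▸ rdNum_le_card H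
  apply le_antisymm
  · have hne : {n | ∃ A B : Finset α, IsDomCouple G A B ∧ n = 2 * A.card + 3 * B.card}.Nonempty :=
      ⟨_, ∅, univ, ⟨disjoint_empty_left _, fun x hx => absurd (mem_univ x) hx⟩, rfl⟩
    obtain ⟨A, B, hAB, hn⟩ := Nat.sInf_mem hne
    rw [hn, ← hr]
    exact rdNum_lexProd_le (by omega) hAB
  · obtain ⟨A, B, hAB, hle⟩ :=
      exists_isDomCouple_le_rdNum_lexProd (G := G) hβ (exists_ne_ne_not_adj hr hno)
    exact le_trans (Nat.sInf_le ⟨A, B, hAB, rfl⟩) hle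

theorem stmt14 {α β : Type*} [Fintype α] [Fintype β] [DecidableEq α]
    (G : SimpleGraph α) (H : SimpleGraph β)
    (hHc : H.Connected) (hr : rdNum H 2 = 3)
    (hno : ∀ φ : β → Finset (Fin 2), IsRDF H 2 φ → rdWeight φ = 3 →
      ∀ h : β, φ h ≠ Finset.univ) :
    rdNum (G.lexProd H) 2 =
      sInf {n | ∃ A B : Finset α, IsDomCouple G A B ∧ n = 2 * A.card + 3 * B.card} :=
  stmt14_general G H hr hno
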